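/- Let Γ be a cancellation monoid with neutral element e and A = ⊕_{γ∈Γ} A_γ a Γ-graded ring whose degree-e part A_e is a local ring in the classical sense. If a nonzero homogeneous element a ∈ A_γ is left invertible in A, then it is also right invertible and hence invertible (a unit of A). Similarly, if a nonzero homogeneous element a ∈ A_γ is right invertible in A, then it is also left invertible and hence invertible. -/
import Mathlib

private lemma idem_local_aux {R : Type*} [Ring R] [IsLocalRing R] {e : R} (h : e * e = e) :
    e = 0 ∨ e = 1 := by
  have h1 : e * (1 - e) = 0 := by rw [mul_sub, mul_one, h, sub_self]
  have hadd : e + (1 - e) = 1 := by abel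
  rcases IsLocalRing.isUnit_or_isUnit_of_add_one hadd with hu | hu
  · right
    have h2 : 1 - e = 0 := hu.mul_left_cancel (h1.trans (mul_zero e).symm)
    exact (sub_eq_zero.mp h2).symm
  · left
    exact hu.mul_right_cancel (h1.trans (zero_mul (1 - e)).symm)

private lemma step2_aux {Γ : Type*} [AddCancelMonoid Γ] [DecidableEq Γ]
    {A : Type*} [Ring A] (𝒜 : Γ → AddSubgroup A) [GradedRing 𝒜] [IsLocalRing (𝒜 0)]
    {γ δ : Γ} {x y : A} (hx : x ∈ 𝒜 γ) (hy : y ∈ 𝒜 δ) (hx0 : x ≠ 0)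
    (h : y * x = 1) : x * y = 1 := by
  have hmem : x * y ∈ 𝒜 (γ + δ) := SetLike.mul_mem_graded hx hy
  have hidem : (x * y) * (x * y) = x * y := by
    rw [mul_assoc, ← mul_assoc y, h, one_mul]
  have he0 : x * y ≠ 0 := by
    intro h0
    apply hx0
    calc x = x * (y * x) := by rw [h, mul_one]
    _ = (x * y) * x := by rw [mul_assoc]
    _ = 0 := by rw [h0, zero_mul]
  have hmem2 : x * y ∈ 𝒜 ((γ + δ) + (γ + δ)) := hidem ▸ SetLike.mul_mem_graded hmem hmem
  have hdeg : (γ + δ) + (γ + δ) = γ + δ := DirectSum.degree_eq_of_mem_mem 𝒜 hmem2 hmem he0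
  have h0 : γ + δ = 0 := add_left_cancel (hdeg.trans (add_zero _).symm)
  have hmem0 : x * y ∈ 𝒜 0 := h0 ▸ hmem
  have hid : (⟨x * y, hmem0⟩ : 𝒜 0) * ⟨x * y, hmem0⟩ = ⟨x * y, hmem0⟩ := Subtype.ext hidem
  rcases idem_local_aux hid with h' | h'
  · exact absurd (congrArg Subtype.val h') he0
  · exact congrArg Subtype.val h'

private lemma step1_left_aux {Γ : Type*} [AddCancelMonoid Γ] [DecidableEq Γ]
    {A : Type*} [Ring A] (𝒜 : Γ → AddSubgroup A) [GradedRing 𝒜] [Nontrivial A]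
    {γ : Γ} {a b : A} (ha : a ∈ 𝒜 γ) (h : b * a = 1) :
    ∃ (δ : Γ) (c : A), c ∈ 𝒜 δ ∧ c * a = 1 := by
  classical
  set s := (DirectSum.decompose 𝒜 b).support with hs
  have hb : (∑ i ∈ s, (DirectSum.decompose 𝒜 b i : A)) = b :=
    DirectSum.sum_support_decompose 𝒜 b
  have h1 : (∑ i ∈ s, (DirectSum.decompose 𝒜 b i : A) * a) = 1 := by
    rw [← Finset.sum_mul, hb, h]
  have key : ∀ i : Γ,
      (DirectSum.decompose 𝒜 ((DirectSum.decompose 𝒜 b i : A) * a) 0 : A)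
      = if i + γ = 0 then (DirectSum.decompose 𝒜 b i : A) * a else 0 := by
    intro i
    have hmem : (DirectSum.decompose 𝒜 b i : A) * a ∈ 𝒜 (i + γ) :=
      SetLike.mul_mem_graded (SetLike.coe_mem _) ha
    split_ifs with hi
    · exact DirectSum.decompose_of_mem_same 𝒜 (hi ▸ hmem)
    · exact DirectSum.decompose_of_mem_ne 𝒜 hmem hi
  have h2 : (∑ i ∈ s, if i + γ = 0 then (DirectSum.decompose 𝒜 b i : A) * a else 0) = 1 := by
    have := congrArg (fun z => (DirectSum.decompose 𝒜 z 0 : A)) h1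
    dsimp only at this
    rw [DirectSum.decompose_sum, DFinsupp.finset_sum_apply,
      AddSubmonoidClass.coe_finset_sum] at this
    simp only [key] at this
    rw [this, DirectSum.decompose_of_mem_same 𝒜 (SetLike.one_mem_graded 𝒜)]
  by_cases hex : ∃ δ : Γ, δ + γ = 0
  · obtain ⟨δ, hδ⟩ := hex
    have hcond : ∀ i : Γ, (i + γ = 0) = (i = δ) := fun i => by
      simp only [eq_iff_iff]
      exact ⟨fun hi => add_right_cancel (hi.trans hδ.symm), fun hi => hi ▸ hδ⟩
    simp only [hcond] at h2
    rw [Finset.sum_ite_eq' s δ (fun i => (DirectSum.decompose 𝒜 b i : A) * a)] at h2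
    split_ifs at h2 with hmem
    · exact ⟨δ, DirectSum.decompose 𝒜 b δ, SetLike.coe_mem _, h2⟩
    · exact absurd h2.symm one_ne_zero
  · push_neg at hex
    rw [Finset.sum_eq_zero (fun i _ => if_neg (hex i))] at h2
    exact absurd h2.symm one_ne_zero

private lemma step1_right_aux {Γ : Type*} [AddCancelMonoid Γ] [DecidableEq Γ]
    {A : Type*} [Ring A] (𝒜 : Γ → AddSubgroup A) [GradedRing 𝒜] [Nontrivial A]
    {γ : Γ} {a b : A} (ha : a ∈ 𝒜 γ) (h : a * b = 1) :
    ∃ (δ : Γ) (c : A), c ∈ 𝒜 δ ∧ a * c = 1 := by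
  classical
  set s := (DirectSum.decompose 𝒜 b).support with hs
  have hb : (∑ i ∈ s, (DirectSum.decompose 𝒜 b i : A)) = b :=
    DirectSum.sum_support_decompose 𝒜 b
  have h1 : (∑ i ∈ s, a * (DirectSum.decompose 𝒜 b i : A)) = 1 := by
    rw [← Finset.mul_sum, hb, h]
  have key : ∀ i : Γ,
      (DirectSum.decompose 𝒜 (a * (DirectSum.decompose 𝒜 b i : A)) 0 : A)
      = if γ + i = 0 then a * (DirectSum.decompose 𝒜 b i : A) else 0 := by
    intro i
    have hmem : a * (DirectSum.decompose 𝒜 b i : A) ∈ 𝒜 (γ + i) :=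
      SetLike.mul_mem_graded ha (SetLike.coe_mem _)
    split_ifs with hi
    · exact DirectSum.decompose_of_mem_same 𝒜 (hi ▸ hmem)
    · exact DirectSum.decompose_of_mem_ne 𝒜 hmem hi
  have h2 : (∑ i ∈ s, if γ + i = 0 then a * (DirectSum.decompose 𝒜 b i : A) else 0) = 1 := by
    have := congrArg (fun z => (DirectSum.decompose 𝒜 z 0 : A)) h1
    dsimp only at this
    rw [DirectSum.decompose_sum, DFinsupp.finset_sum_apply,
      AddSubmonoidClass.coe_finset_sum] at this
    simp only [key] at this
    rw [this, DirectSum.decompose_of_mem_same 𝒜 (SetLike.one_mem_graded 𝒜)]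
  by_cases hex : ∃ δ : Γ, γ + δ = 0
  · obtain ⟨δ, hδ⟩ := hex
    have hcond : ∀ i : Γ, (γ + i = 0) = (i = δ) := fun i => by
      simp only [eq_iff_iff]
      exact ⟨fun hi => add_left_cancel (hi.trans hδ.symm), fun hi => hi ▸ hδ⟩
    simp only [hcond] at h2
    rw [Finset.sum_ite_eq' s δ (fun i => a * (DirectSum.decompose 𝒜 b i : A))] at h2
    split_ifs at h2 with hmem
    · exact ⟨δ, DirectSum.decompose 𝒜 b δ, SetLike.coe_mem _, h2⟩
    · exact absurd h2.symm one_ne_zero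
  · push_neg at hex
    rw [Finset.sum_eq_zero (fun i _ => if_neg (hex i))] at h2
    exact absurd h2.symm one_ne_zero

/-- **Lemma 2.2.** Let `Γ` be a cancellation monoid (written additively) and `A` a
`Γ`-graded ring whose degree-`0` part `A_0` is a local ring in the classical sense.
If a nonzero homogeneous element `a ∈ A_γ` is left invertible in `A`, then it is also
right invertible, hence a unit of `A`; similarly, if it is right invertible then it is
also left invertible, hence a unit of `A`. -/
theorem isUnit_of_one_sided_invertible_of_isLocalRing_degree_zero
    {Γ : Type*} [AddCancelMonoid Γ] [DecidableEq Γ]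
    {A : Type*} [Ring A] (𝒜 : Γ → AddSubgroup A) [GradedRing 𝒜]
    [IsLocalRing (𝒜 0)]
    (γ : Γ) (a : A) (ha : a ∈ 𝒜 γ) (ha0 : a ≠ 0) :
    ((∃ b : A, b * a = 1) → (∃ b : A, a * b = 1) ∧ IsUnit a) ∧
    ((∃ b : A, a * b = 1) → (∃ b : A, b * a = 1) ∧ IsUnit a) := by
  have : Nontrivial A := ⟨a, 0, ha0⟩
  constructor
  · rintro ⟨b, hb⟩
    obtain ⟨δ, c, hc, hca⟩ := step1_left_aux 𝒜 ha hb
    have hac : a * c = 1 := step2_aux 𝒜 ha hc ha0 hca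
    exact ⟨⟨c, hac⟩, ⟨⟨a, c, hac, hca⟩, rfl⟩⟩
  · rintro ⟨b, hb⟩
    obtain ⟨δ, c, hc, hac⟩ := step1_right_aux 𝒜 ha hb
    have hc0 : c ≠ 0 := by
      intro h0
      rw [h0, mul_zero] at hac
      exact one_ne_zero hac.symm
    have hca : c * a = 1 := step2_aux 𝒜 hc ha hc0 hac
    exact ⟨⟨c, hca⟩, ⟨⟨a, c, hac, hca⟩, rfl⟩⟩
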